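/- arXiv:math/0702128 — 3 statements merged into one kernel-verified Lean document; each statement's English description precedes it below -/
import Mathlib

section
/- Let φ be a group-like element of k⟨⟨X,Y⟩⟩ satisfying Drinfel'd's pentagon equation φ(t₁₂,t₂₃+t₂₄)φ(t₁₃+t₂₃,t₃₄) = φ(t₂₃,t₃₄)φ(t₁₂+t₁₃,t₂₄+t₃₄)φ(t₁₂,t₂₃) in U𝔞₄. Then φ is commutator group-like, i.e. the coefficients of X and of Y in φ vanish. -/
open scoped BigOperators

/-- Words in the letters `X = 0`, `Y = 1`, ... -/
abbrev Word (n : ℕ) := List (Fin n)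

/-- Coefficient families of non-commutative formal power series `k⟨⟨X₁,…,Xₙ⟩⟩`:
a series is recorded by its coefficient at each word. -/
abbrev NC (k : Type*) (n : ℕ) := Word n → k

/-- The list of shuffles (with multiplicity) of two words. -/
def shuffle {α : Type*} : List α → List α → List (List α)
  | [], v => [v]
  | u, [] => [u]
  | a :: u, b :: v =>
      ((shuffle u (b :: v)).map (a :: ·)) ++ ((shuffle (a :: u) v).map (b :: ·))
  termination_by u v => u.length + v.length
  decreasing_by all_goals simp +arith +decide

variable {k : Type*}

/-- `φ` is group-like for the coproduct with `X`, `Y` primitive: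
`Δφ = φ ⊗ φ` and constant term 1, expressed coefficientwise via shuffles. -/
def IsGroupLike [CommRing k] (φ : NC k 2) : Prop :=
  φ [] = 1 ∧ ∀ u v : Word 2, φ u * φ v = ((shuffle u v).map φ).sum

/-- `φ` is Lie-like (primitive): `Δφ = φ⊗1 + 1⊗φ`, coefficientwise. -/
def IsLieLike [CommRing k] (φ : NC k 2) : Prop :=
  φ [] = 0 ∧ ∀ u v : Word 2, u ≠ [] → v ≠ [] → ((shuffle u v).map φ).sum = 0

/-- commutator group-like: group-like with vanishing coefficients of `X` and `Y`. -/
def IsCommGroupLike [CommRing k] (φ : NC k 2) : Prop :=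
  IsGroupLike φ ∧ φ [0] = 0 ∧ φ [1] = 0

/-- A degree-one element `a·T` of `A[[T]]`, modelling a degree-1 element of a
completed graded algebra. -/
noncomputable def lin {A : Type*} [Ring A] (a : A) : PowerSeries A :=
  PowerSeries.mk fun n => if n = 1 then a else 0

/-- Substitution `φ(X₁, X₂)` of a non-commutative power series `φ` at two
elements (of positive valuation) of a completed graded algebra, where the
completion is modelled by `A[[T]]` (degree `n` part = coefficient of `Tⁿ`). -/
noncomputable def substPS [CommRing k] {A : Type*} [Ring A] [Algebra k A]
    (φ : NC k 2) (P Q : PowerSeries A) : PowerSeries A :=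
  PowerSeries.mk fun n =>
    ∑ m ∈ Finset.range (n + 1), ∑ u : Fin m → Fin 2,
      φ (List.ofFn u) • PowerSeries.coeff (R := A) n (((List.ofFn u).map ![P, Q]).prod)

/-- Exponential of a power series (meaningful when the constant term vanishes). -/
noncomputable def expPS (k : Type*) [Field k] {A : Type*} [Ring A] [Algebra k A]
    (s : PowerSeries A) : PowerSeries A :=
  PowerSeries.mk fun n =>
    ∑ m ∈ Finset.range (n + 1), (Nat.factorial m : k)⁻¹ • PowerSeries.coeff (R := A) n (s ^ m)

/-- Coefficients of the multiplicative inverse of a power series with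
constant term `1`. -/
noncomputable def invCoeff {A : Type*} [Ring A] (s : PowerSeries A) : ℕ → A
  | 0 => 1
  | n + 1 => -∑ j : Fin (n + 1), invCoeff s j.1 * PowerSeries.coeff (R := A) (n + 1 - j.1) s
  termination_by n => n
  decreasing_by exact j.2

/-- Inverse of a power series with constant term `1`. -/
noncomputable def PSInv {A : Type*} [Ring A] (s : PowerSeries A) : PowerSeries A :=
  PowerSeries.mk (invCoeff s)

/-- Relations presenting (the enveloping algebra of) the pure sphere braid Lie
algebra `𝔓₅` on 5 strings. -/
inductive P5Rel (k : Type*) [CommRing k] :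
    FreeAlgebra k (Fin 5 × Fin 5) → FreeAlgebra k (Fin 5 × Fin 5) → Prop
  | diag (i : Fin 5) : P5Rel k (FreeAlgebra.ι k (i, i)) 0
  | symm (i j : Fin 5) : P5Rel k (FreeAlgebra.ι k (i, j)) (FreeAlgebra.ι k (j, i))
  | rowsum (i : Fin 5) : P5Rel k (∑ j : Fin 5, FreeAlgebra.ι k (i, j)) 0
  | disj (i j l m : Fin 5) (h : i ≠ l ∧ i ≠ m ∧ j ≠ l ∧ j ≠ m) :
      P5Rel k (FreeAlgebra.ι k (i, j) * FreeAlgebra.ι k (l, m))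
              (FreeAlgebra.ι k (l, m) * FreeAlgebra.ι k (i, j))

/-- The (graded) enveloping algebra `U𝔓₅` of the pure sphere braid Lie algebra. -/
abbrev P5A (k : Type*) [CommRing k] := RingQuot (P5Rel k)

/-- The generator `X_{ij}` of `U𝔓₅`. -/
noncomputable def Xg (k : Type*) [CommRing k] (i j : Fin 5) : P5A k :=
  RingQuot.mkAlgHom k (P5Rel k) (FreeAlgebra.ι k (i, j))

/-- Relations presenting (the enveloping algebra of) the infinitesimal braid
("chord diagram") Lie algebra `𝔞ₙ`. -/
inductive ARel (k : Type*) [CommRing k] (n : ℕ) :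
    FreeAlgebra k (Fin n × Fin n) → FreeAlgebra k (Fin n × Fin n) → Prop
  | diag (i : Fin n) : ARel k n (FreeAlgebra.ι k (i, i)) 0
  | symm (i j : Fin n) : ARel k n (FreeAlgebra.ι k (i, j)) (FreeAlgebra.ι k (j, i))
  | comm3 (i j l : Fin n) (h : i ≠ j ∧ i ≠ l ∧ j ≠ l) :
      ARel k n (FreeAlgebra.ι k (i, j) * (FreeAlgebra.ι k (i, l) + FreeAlgebra.ι k (j, l)))
               ((FreeAlgebra.ι k (i, l) + FreeAlgebra.ι k (j, l)) * FreeAlgebra.ι k (i, j))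
  | comm4 (i j l m : Fin n)
      (h : i ≠ j ∧ i ≠ l ∧ i ≠ m ∧ j ≠ l ∧ j ≠ m ∧ l ≠ m) :
      ARel k n (FreeAlgebra.ι k (i, j) * FreeAlgebra.ι k (l, m))
               (FreeAlgebra.ι k (l, m) * FreeAlgebra.ι k (i, j))

/-- The (graded) enveloping algebra `U𝔞ₙ`. -/
abbrev AA (k : Type*) [CommRing k] (n : ℕ) := RingQuot (ARel k n)

/-- The generator `t_{ij}` of `U𝔞ₙ`. -/
noncomputable def tg (k : Type*) [CommRing k] (n : ℕ) (i j : Fin n) : AA k n :=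
  RingQuot.mkAlgHom k (ARel k n) (FreeAlgebra.ι k (i, j))

/-- The series `X` (i.e. the image of the first generator) in the model
`(FreeAlgebra k (Fin 2))[[T]]` of `k⟨⟨X,Y⟩⟩`. -/
noncomputable def XF (k : Type*) [CommRing k] : PowerSeries (FreeAlgebra k (Fin 2)) :=
  lin (FreeAlgebra.ι k (0 : Fin 2))

/-- The series `Y`. -/
noncomputable def YF (k : Type*) [CommRing k] : PowerSeries (FreeAlgebra k (Fin 2)) :=
  lin (FreeAlgebra.ι k (1 : Fin 2))

/-- The series `Z = -X-Y`. -/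
noncomputable def ZF (k : Type*) [CommRing k] : PowerSeries (FreeAlgebra k (Fin 2)) :=
  -XF k - YF k

/-- `φ(X_{ab}, X_{bc})` in the completed `U𝔓₅`. -/
noncomputable def S5 (k : Type*) [Field k] (φ : NC k 2) (a b c : Fin 5) :
    PowerSeries (P5A k) :=
  substPS φ (lin (Xg k a b)) (lin (Xg k b c))

/-- The multiplicative 5-cycle relation
`φ(X₁₂,X₂₃)φ(X₃₄,X₄₅)φ(X₅₁,X₁₂)φ(X₂₃,X₃₄)φ(X₄₅,X₅₁) = 1` in the completed `U𝔓₅`. -/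
def FiveCycleMul (k : Type*) [Field k] (φ : NC k 2) : Prop :=
  S5 k φ 0 1 2 * S5 k φ 2 3 4 * S5 k φ 4 0 1 * S5 k φ 1 2 3 * S5 k φ 3 4 0 = 1

/-- `t_{ij}` as a degree-one element of the completed `U𝔞₄`. -/
noncomputable def lt (k : Type*) [Field k] (i j : Fin 4) : PowerSeries (AA k 4) :=
  lin (tg k 4 i j)

/-- Drinfel'd's pentagon equation
`φ(t₁₂,t₂₃+t₂₄)φ(t₁₃+t₂₃,t₃₄) = φ(t₂₃,t₃₄)φ(t₁₂+t₁₃,t₂₄+t₃₄)φ(t₁₂,t₂₃)`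
in the completed `U𝔞₄` (strings are `0,1,2,3`). -/
def Pentagon (k : Type*) [Field k] (φ : NC k 2) : Prop :=
  substPS φ (lt k 0 1) (lt k 1 2 + lt k 1 3) * substPS φ (lt k 0 2 + lt k 1 2) (lt k 2 3) =
    substPS φ (lt k 1 2) (lt k 2 3) *
      substPS φ (lt k 0 1 + lt k 0 2) (lt k 1 3 + lt k 2 3) * substPS φ (lt k 0 1) (lt k 1 2)

/-- The 2-cycle relation `φ(X,Y)φ(Y,X) = 1` in `k⟨⟨X,Y⟩⟩`. -/
def TwoCycleMul (k : Type*) [Field k] (φ : NC k 2) : Prop :=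
  substPS φ (XF k) (YF k) * substPS φ (YF k) (XF k) = 1

/-- The 3-cycle relation
`e^{μX/2}φ(Z,X)e^{μZ/2}φ(Y,Z)e^{μY/2}φ(X,Y) = 1`, `Z = -X-Y`, in `k⟨⟨X,Y⟩⟩`. -/
def ThreeCycleMul (k : Type*) [Field k] (μ : k) (φ : NC k 2) : Prop :=
  expPS k ((μ / 2) • XF k) * substPS φ (ZF k) (XF k) * expPS k ((μ / 2) • ZF k) *
      substPS φ (YF k) (ZF k) * expPS k ((μ / 2) • YF k) * substPS φ (XF k) (YF k) = 1

/-- The special 3-cycle relation `φ(Z,X)φ(Y,Z)φ(X,Y) = 1`, `Z = -X-Y`. -/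
def Special3 (k : Type*) [Field k] (φ : NC k 2) : Prop :=
  substPS φ (ZF k) (XF k) * substPS φ (YF k) (ZF k) * substPS φ (XF k) (YF k) = 1

/-- Drinfel'd's first hexagon equation, for elements `a = t₁₂`, `b = t₁₃`, `c = t₂₃`:
`exp(μ(t₁₃+t₂₃)/2) = φ(t₁₃,t₁₂)exp(μt₁₃/2)φ(t₁₃,t₂₃)⁻¹exp(μt₂₃/2)φ(t₁₂,t₂₃)`. -/
def Hex1 (k : Type*) [Field k] {A : Type*} [Ring A] [Algebra k A]
    (μ : k) (φ : NC k 2) (a b c : A) : Prop :=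
  expPS k ((μ / 2) • (lin b + lin c)) =
    substPS φ (lin b) (lin a) * expPS k ((μ / 2) • lin b) * PSInv (substPS φ (lin b) (lin c)) *
      expPS k ((μ / 2) • lin c) * substPS φ (lin a) (lin c)

/-- Drinfel'd's second hexagon equation, for elements `a = t₁₂`, `b = t₁₃`, `c = t₂₃`:
`exp(μ(t₁₂+t₁₃)/2) = φ(t₂₃,t₁₃)⁻¹exp(μt₁₃/2)φ(t₁₂,t₁₃)exp(μt₁₂/2)φ(t₁₂,t₂₃)⁻¹`. -/
def Hex2 (k : Type*) [Field k] {A : Type*} [Ring A] [Algebra k A]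
    (μ : k) (φ : NC k 2) (a b c : A) : Prop :=
  expPS k ((μ / 2) • (lin a + lin b)) =
    PSInv (substPS φ (lin c) (lin b)) * expPS k ((μ / 2) • lin b) * substPS φ (lin a) (lin b) *
      expPS k ((μ / 2) • lin a) * PSInv (substPS φ (lin a) (lin c))

/-!
Since `φ` has constant term `1`, the degree-one part of a product of substitutions of `φ` is
the sum of their degree-one parts. In degree one the pentagon equation therefore reduces to
`φ_X t₁₂ + φ_Y t₃₄ = 0` in `U𝔞₄`, and `t₁₂`, `t₃₄` are linearly independent there: the
relations of `𝔞₄` are commutators, so any symmetric assignment of scalars to the `t_{ij}`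
with zero diagonal defines a character of `U𝔞₄`.
-/

open PowerSeries

section DegreeOne

variable {A : Type*} [Ring A]

lemma coeff_lin (a : A) (n : ℕ) : coeff n (lin a) = if n = 1 then a else 0 :=
  coeff_mk _ _

lemma coeff_one_mul_of_constantCoeff_eq_one {f g : PowerSeries A}
    (hf : constantCoeff f = 1) (hg : constantCoeff g = 1) :
    coeff 1 (f * g) = coeff 1 f + coeff 1 g := by
  rw [coeff_mul,
    show (Finset.HasAntidiagonal.antidiagonal 1 : Finset (ℕ × ℕ)) = {(0, 1), (1, 0)} from rfl,
    Finset.sum_insert (by decide), Finset.sum_singleton]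
  simp only [coeff_zero_eq_constantCoeff_apply, hf, hg, one_mul, mul_one, add_comm]

variable [CommRing k] [Algebra k A]

lemma constantCoeff_substPS (φ : NC k 2) (P Q : PowerSeries A) :
    constantCoeff (substPS φ P Q) = algebraMap k A (φ []) := by
  rw [← coeff_zero_eq_constantCoeff_apply]
  simp [substPS, Algebra.smul_def]

lemma coeff_one_substPS (φ : NC k 2) (P Q : PowerSeries A) :
    coeff 1 (substPS φ P Q) = φ [0] • coeff 1 P + φ [1] • coeff 1 Q := by
  simp only [substPS, coeff_mk, Finset.sum_range_succ, Finset.sum_range_zero]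
  simpa [Fin.sum_univ_two] using
    (Equiv.funUnique (Fin 1) (Fin 2)).sum_comp fun i => φ [i] • coeff 1 (![P, Q] i)

end DegreeOne

lemma Pentagon.linear_part [Field k] {φ : NC k 2} (hpent : Pentagon k φ) (h1 : φ [] = 1) :
    φ [0] • tg k 4 0 1 + φ [1] • tg k 4 2 3 = 0 := by
  have hconst (P Q : PowerSeries (AA k 4)) : constantCoeff (substPS φ P Q) = 1 := by
    rw [constantCoeff_substPS, h1, map_one]
  have E := congrArg (coeff 1) hpent
  rw [coeff_one_mul_of_constantCoeff_eq_one (hconst _ _) (hconst _ _),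
    coeff_one_mul_of_constantCoeff_eq_one (by rw [map_mul, hconst, hconst, one_mul]) (hconst _ _),
    coeff_one_mul_of_constantCoeff_eq_one (hconst _ _) (hconst _ _)] at E
  simp only [coeff_one_substPS, lt, map_add, coeff_lin, if_true] at E
  linear_combination (norm := module) -E

namespace AA

variable {n : ℕ} {B : Type*} [CommRing k] [CommRing B] [Algebra k B]

noncomputable def liftComm (c : Fin n → Fin n → B) (hsymm : ∀ i j, c i j = c j i)
    (hdiag : ∀ i, c i i = 0) : AA k n →ₐ[k] B :=
  RingQuot.liftAlgHom k ⟨FreeAlgebra.lift k fun p => c p.1 p.2, fun x y h => by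
    cases h with
    | diag i => simp [hdiag]
    | symm i j => simp [hsymm i j]
    | comm3 i j l => simp only [map_mul, map_add, FreeAlgebra.lift_ι_apply]; ring
    | comm4 i j l m => simp only [map_mul, FreeAlgebra.lift_ι_apply]; ring⟩

@[simp]
lemma liftComm_tg (c : Fin n → Fin n → B) (hsymm : ∀ i j, c i j = c j i)
    (hdiag : ∀ i, c i i = 0) (i j : Fin n) : liftComm c hsymm hdiag (tg k n i j) = c i j := by
  rw [tg, liftComm, RingQuot.liftAlgHom_mkAlgHom_apply, FreeAlgebra.lift_ι_apply]

noncomputable def edgeChar {i j : Fin n} (hij : i ≠ j) : AA k n →ₐ[k] k :=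
  liftComm (fun l m => if s(l, m) = s(i, j) then 1 else 0) (fun l m => by rw [Sym2.eq_swap])
    fun l => if_neg <| by rw [Sym2.eq_iff]; rintro (⟨rfl, rfl⟩ | ⟨rfl, rfl⟩) <;> exact hij rfl

lemma edgeChar_tg {i j : Fin n} (hij : i ≠ j) (l m : Fin n) :
    edgeChar (k := k) hij (tg k n l m) = if s(l, m) = s(i, j) then 1 else 0 :=
  liftComm_tg ..

lemma eq_zero_of_smul_tg_add_smul_tg_eq_zero {i j l m : Fin n} (hij : i ≠ j) (hlm : l ≠ m)
    (hne : s(i, j) ≠ s(l, m)) {a b : k} (h : a • tg k n i j + b • tg k n l m = 0) :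
    a = 0 ∧ b = 0 := by
  have ha := congrArg (edgeChar hij) h
  have hb := congrArg (edgeChar hlm) h
  simp only [map_add, map_smul, edgeChar_tg, map_zero, if_pos, hne, hne.symm, if_false,
    smul_eq_mul, mul_one, mul_zero, add_zero, zero_add] at ha hb
  exact ⟨ha, hb⟩

end AA

theorem statement7_general (k : Type*) [Field k] (φ : NC k 2)
    (hφ : IsGroupLike φ) (hpent : Pentagon k φ) :
    φ [0] = 0 ∧ φ [1] = 0 :=
  AA.eq_zero_of_smul_tg_add_smul_tg_eq_zero (by decide) (by decide) (by decide)
    (hpent.linear_part hφ.1)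

/-- If a group-like `φ ∈ k⟨⟨X,Y⟩⟩` satisfies Drinfel'd's pentagon equation in
the completed `U𝔞₄`, then `φ` is commutator group-like: the coefficients of
`X` and of `Y` in `φ` vanish. -/
theorem statement7 (k : Type*) [Field k] [CharZero k] (φ : NC k 2)
    (hφ : IsGroupLike φ) (hpent : Pentagon k φ) :
    φ [0] = 0 ∧ φ [1] = 0 :=
  statement7_general k φ hφ hpent
end

section
/- Let φ be a commutator group-like element of k⟨⟨X,Y⟩⟩ satisfying the 5-cycle relation φ(X₁₂,X₂₃)φ(X₃₄,X₄₅)φ(X₅₁,X₁₂)φ(X₂₃,X₃₄)φ(X₄₅,X₅₁)=1 in the completed universal enveloping algebra U𝔓₅ of the pure sphere braid Lie algebra on 5 strings. Then φ satisfies the 2-cycle relation φ(X,Y)φ(Y,X)=1 in k⟨⟨X,Y⟩⟩. -/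
open scoped BigOperators

variable {k : Type*}

/-!
Project `U𝔓₅` onto `k⟨X,Y⟩` by forgetting the fifth string and using that `𝔓₄` is free on
`X₁₂ = X₃₄` and `X₂₃ = X₁₄`. The five factors of the 5-cycle relation become
`φ(X,Y)`, `φ(X,0)`, `φ(0,X)`, `φ(Y,X)`, `φ(0,0)`, and `φ(a,0) = φ(0,b) = 1` because a
group-like `φ` without linear terms has no coefficient on any word `Xⁿ` or `Yⁿ`.
-/

theorem shuffle_singleton_replicate {α : Type*} (x : α) (n : ℕ) :
    shuffle [x] (List.replicate n x) = List.replicate (n + 1) (List.replicate (n + 1) x) := by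
  induction n with
  | zero => simp [shuffle]
  | succ n ih =>
    rw [List.replicate_succ, shuffle, ← List.replicate_succ, ih]
    simp [shuffle, List.map_replicate, List.replicate_succ]

theorem IsGroupLike.apply_replicate_eq_zero [CommRing k] [IsAddTorsionFree k] {φ : NC k 2}
    (hφ : IsGroupLike φ) {x : Fin 2} (hx : φ [x] = 0) {m : ℕ} (hm : m ≠ 0) :
    φ (List.replicate m x) = 0 := by
  obtain ⟨n, rfl⟩ := Nat.exists_eq_succ_of_ne_zero hm
  have h := hφ.2 [x] (List.replicate n x)
  -- `φ[x] φ(xⁿ) = (n + 1) φ(xⁿ⁺¹)`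
  rw [hx, zero_mul, shuffle_singleton_replicate, List.map_replicate, List.sum_replicate] at h
  exact IsAddTorsionFree.nsmul_right_injective hm (by simpa using h.symm)

section Substitution

variable [CommRing k] {A B : Type*} [Ring A] [Ring B] [Algebra k A] [Algebra k B]

theorem substPS_eq_one {φ : NC k 2} {P Q : PowerSeries A} (h₀ : φ [] = 1)
    (h : ∀ w : Word 2, w ≠ [] → φ w = 0 ∨ (0 : PowerSeries A) ∈ w.map ![P, Q]) :
    substPS φ P Q = 1 := by
  ext n
  rw [substPS, PowerSeries.coeff_mk, Finset.sum_eq_single 0]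
  · simp [h₀]
  · intro m _ hm
    refine Finset.sum_eq_zero fun u _ => ?_
    rcases h (List.ofFn u) (by simpa using hm) with hu | hu
    · rw [hu, zero_smul]
    · rw [List.prod_eq_zero hu, map_zero, smul_zero]
  · simp

theorem IsCommGroupLike.substPS_zero_right [IsAddTorsionFree k] {φ : NC k 2}
    (hφ : IsCommGroupLike φ) (P : PowerSeries A) : substPS φ P 0 = 1 := by
  refine substPS_eq_one hφ.1.1 fun w hw => ?_
  by_cases hX : ∀ y ∈ w, y = 0
  · rw [List.eq_replicate_of_mem hX]
    exact .inl (hφ.1.apply_replicate_eq_zero hφ.2.1 (by simpa using hw))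
  · push Not at hX
    obtain ⟨y, hy, hy0⟩ := hX
    exact .inr (List.mem_map.2 ⟨y, hy, by fin_cases y <;> simp_all⟩)

theorem IsCommGroupLike.substPS_zero_left [IsAddTorsionFree k] {φ : NC k 2}
    (hφ : IsCommGroupLike φ) (Q : PowerSeries A) : substPS φ 0 Q = 1 := by
  refine substPS_eq_one hφ.1.1 fun w hw => ?_
  by_cases hY : ∀ y ∈ w, y = 1
  · rw [List.eq_replicate_of_mem hY]
    exact .inl (hφ.1.apply_replicate_eq_zero hφ.2.2 (by simpa using hw))
  · push Not at hY
    obtain ⟨y, hy, hy1⟩ := hY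
    exact .inr (List.mem_map.2 ⟨y, hy, by fin_cases y <;> simp_all⟩)

theorem lin_zero : lin (0 : A) = 0 := by
  ext n
  simp [lin]

theorem PowerSeries.map_lin (F : A →+* B) (a : A) : PowerSeries.map F (lin a) = lin (F a) := by
  ext n
  simp [lin, apply_ite F]

theorem PowerSeries.map_substPS (F : A →ₐ[k] B) (φ : NC k 2) (P Q : PowerSeries A) :
    PowerSeries.map (F : A →+* B) (substPS φ P Q) =
      substPS φ (PowerSeries.map (F : A →+* B) P) (PowerSeries.map (F : A →+* B) Q) := by
  ext n
  simp only [substPS, PowerSeries.coeff_map, PowerSeries.coeff_mk, map_sum]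
  refine Finset.sum_congr rfl fun m _ => Finset.sum_congr rfl fun u _ => ?_
  rw [RingHom.coe_coe, map_smul, ← RingHom.coe_coe, ← PowerSeries.coeff_map, map_list_prod,
    List.map_map]
  congr 4
  funext i
  fin_cases i <;> rfl

end Substitution

/-- Coordinates on the basis `X, Y` of the image of `X_{ij}` under the projection
`U𝔓₅ → k⟨X,Y⟩`: string `4` is forgotten, and in `𝔓₄` one has `X₀₁ = X₂₃`, `X₁₂ = X₀₃`,
`X₀₂ = X₁₃ = -X₀₁ - X₁₂`. -/
def projCoord : Fin 5 → Fin 5 → ℤ × ℤ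
  | 0, 1 | 1, 0 | 2, 3 | 3, 2 => (1, 0)
  | 1, 2 | 2, 1 | 0, 3 | 3, 0 => (0, 1)
  | 0, 2 | 2, 0 | 1, 3 | 3, 1 => (-1, -1)
  | _, _ => 0

noncomputable def projGen (k : Type*) [CommRing k] (i j : Fin 5) : FreeAlgebra k (Fin 2) :=
  (projCoord i j).1 • FreeAlgebra.ι k 0 + (projCoord i j).2 • FreeAlgebra.ι k 1

theorem projGen_respects_P5Rel (k : Type*) [CommRing k] ⦃x y : FreeAlgebra k (Fin 5 × Fin 5)⦄
    (h : P5Rel k x y) :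
    FreeAlgebra.lift k (fun p => projGen k p.1 p.2) x =
      FreeAlgebra.lift k (fun p => projGen k p.1 p.2) y := by
  induction h with
  | diag i =>
    have hi : projCoord i i = 0 := by revert i; decide
    simp [projGen, hi]
  | symm i j =>
    have hij : projCoord i j = projCoord j i := by revert i j; decide
    simp [projGen, hij]
  | rowsum i =>
    have hi : ∑ j, projCoord i j = 0 := by revert i; decide
    simp only [map_sum, FreeAlgebra.lift_ι_apply, map_zero, projGen, Finset.sum_add_distrib,
      ← Finset.sum_smul, ← Prod.fst_sum, ← Prod.snd_sum, hi, Prod.fst_zero, Prod.snd_zero,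
      zero_smul, add_zero]
  | disj i j l m h =>
    obtain ⟨h₁, h₂, h₃, h₄⟩ := h
    have hc : projCoord i j = projCoord l m ∨ projCoord i j = 0 ∨ projCoord l m = 0 := by
      revert i j l m; decide
    simp only [map_mul, FreeAlgebra.lift_ι_apply]
    rcases hc with hc | hc | hc <;> simp [projGen, hc]

noncomputable def projection (k : Type*) [CommRing k] : P5A k →ₐ[k] FreeAlgebra k (Fin 2) :=
  RingQuot.liftAlgHom k ⟨FreeAlgebra.lift k (fun p => projGen k p.1 p.2), projGen_respects_P5Rel k⟩

theorem projection_Xg (k : Type*) [CommRing k] (i j : Fin 5) :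
    projection k (Xg k i j) = projGen k i j := by
  simp [projection, Xg]

/-- If a commutator group-like `φ ∈ k⟨⟨X,Y⟩⟩` satisfies the 5-cycle relation
`φ(X₁₂,X₂₃)φ(X₃₄,X₄₅)φ(X₅₁,X₁₂)φ(X₂₃,X₃₄)φ(X₄₅,X₅₁) = 1` in the completed
`U𝔓₅`, then it satisfies the 2-cycle relation `φ(X,Y)φ(Y,X) = 1`. -/
theorem statement8 (k : Type*) [Field k] [CharZero k] (φ : NC k 2)
    (hφ : IsCommGroupLike φ) (h5 : FiveCycleMul k φ) :
    TwoCycleMul k φ := by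
  have h := congrArg (PowerSeries.map (projection k : P5A k →+* FreeAlgebra k (Fin 2))) h5
  simp only [S5, map_mul, map_one, PowerSeries.map_substPS, PowerSeries.map_lin, RingHom.coe_coe,
    projection_Xg] at h
  have h₀₁ : lin (projGen k 0 1) = XF k := by simp [projGen, projCoord, XF]
  have h₁₂ : lin (projGen k 1 2) = YF k := by simp [projGen, projCoord, YF]
  have h₂₃ : lin (projGen k 2 3) = XF k := by simp [projGen, projCoord, XF]
  have h₃₄ : lin (projGen k 3 4) = 0 := by simp [projGen, projCoord, lin_zero]
  have h₄₀ : lin (projGen k 4 0) = 0 := by simp [projGen, projCoord, lin_zero]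
  rw [h₀₁, h₁₂, h₂₃, h₃₄, h₄₀, hφ.substPS_zero_right, hφ.substPS_zero_left,
    hφ.substPS_zero_right, mul_one, mul_one, mul_one] at h
  exact h
end

section
/- Suppose φ is a commutator group-like element of k⟨⟨X,Y⟩⟩ and μ ∈ k satisfy the 3-cycle relation e^{μX/2}φ(Z,X)e^{μZ/2}φ(Y,Z)e^{μY/2}φ(X,Y)=1 with Z=−X−Y. Then, comparing coefficients of the monomial XY, one has c₂(φ) = μ²/24, where c₂(φ) is the coefficient of XY in φ. -/
open scoped BigOperators

variable {k : Type*}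

/-! In the grading variable every factor of the 3-cycle relation is `1 + aT + bT² + O(T³)`, and
such truncations multiply by `(a, b) * (c, d) = (a + c, b + ac + d)`. The shuffle relations in
degree two make `φ(P, Q) ≡ 1 + c₂(φ)(PQ - QP)` for a commutator group-like `φ`, while
`e^{λP} ≡ 1 + λP + λ²P²/2`. Hence the degree-two part of the left-hand side is an explicit
quadratic expression in `X`, `Y`, which must vanish; its coefficient of `XY` is
`3c₂(φ) - μ²/8`. -/

open PowerSeries

lemma sum_fin_one_fun {M α : Type*} [AddCommMonoid M] [Fintype α] (g : (Fin 1 → α) → M) :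
    ∑ u : Fin 1 → α, g u = ∑ i : α, g ![i] :=
  Fintype.sum_equiv (Equiv.funUnique (Fin 1) α) _ _ fun u => by
    congr 1; ext j; simp [Subsingleton.elim j 0]

lemma sum_fin_two_fun {M α : Type*} [AddCommMonoid M] [Fintype α] (g : (Fin 2 → α) → M) :
    ∑ u : Fin 2 → α, g u = ∑ i : α, ∑ j : α, g ![i, j] := by
  rw [Fintype.sum_equiv (piFinTwoEquiv fun _ => α) g (fun p => g ![p.1, p.2]),
    Fintype.sum_prod_type]
  intro u; congr 1; ext j; fin_cases j <;> simp [piFinTwoEquiv]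

lemma shuffle_singleton {α : Type*} (a b : α) : shuffle [a] [b] = [[a, b], [b, a]] := by
  simp [shuffle]

lemma IsGroupLike.mul_singleton [CommRing k] {φ : NC k 2} (hφ : IsGroupLike φ) (i j : Fin 2) :
    φ [i] * φ [j] = φ [i, j] + φ [j, i] := by
  simpa [shuffle_singleton] using hφ.2 [i] [j]

lemma IsCommGroupLike.coeff_quadratic [Field k] [CharZero k] {φ : NC k 2}
    (hφ : IsCommGroupLike φ) : φ [0, 0] = 0 ∧ φ [1, 1] = 0 ∧ φ [1, 0] = -φ [0, 1] := by
  obtain ⟨hgl, hX, hY⟩ := hφ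
  refine ⟨?_, ?_, ?_⟩
  · linear_combination (-1 / 2 : k) * hgl.mul_singleton 0 0 + (φ [0] / 2) * hX
  · linear_combination (-1 / 2 : k) * hgl.mul_singleton 1 1 + (φ [1] / 2) * hY
  · linear_combination -hgl.mul_singleton 0 1 + φ [1] * hX

section LowCoeffs

variable {A : Type*} [Ring A]

def HasLowCoeffs (f : PowerSeries A) (a b : A) : Prop :=
  coeff 0 f = 1 ∧ coeff 1 f = a ∧ coeff 2 f = b

lemma hasLowCoeffs_one : HasLowCoeffs (1 : PowerSeries A) 0 0 := by
  simp [HasLowCoeffs, coeff_one]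

lemma HasLowCoeffs.eq_zero_of_eq_one {f : PowerSeries A} {a b : A} (h : HasLowCoeffs f a b)
    (hf : f = 1) : a = 0 ∧ b = 0 := by
  subst hf
  exact ⟨h.2.1.symm.trans hasLowCoeffs_one.2.1, h.2.2.symm.trans hasLowCoeffs_one.2.2⟩

lemma HasLowCoeffs.mul {f g : PowerSeries A} {a b c d : A} (hf : HasLowCoeffs f a b)
    (hg : HasLowCoeffs g c d) : HasLowCoeffs (f * g) (a + c) (b + a * c + d) := by
  obtain ⟨hf0, hf1, hf2⟩ := hf
  obtain ⟨hg0, hg1, hg2⟩ := hg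
  refine ⟨?_, ?_, ?_⟩ <;>
    simp only [coeff_mul, Finset.Nat.sum_antidiagonal_eq_sum_range_succ_mk, Finset.sum_range_succ,
      Finset.sum_range_zero, Nat.sub_self, Nat.sub_zero, Nat.reduceSub, hf0, hf1, hf2, hg0, hg1,
      hg2, zero_add, one_mul, mul_one]
  all_goals abel

lemma coeff_two_lin_mul_lin (a b : A) : coeff 2 (lin a * lin b) = a * b := by
  simp [coeff_mul, Finset.Nat.sum_antidiagonal_eq_sum_range_succ_mk, Finset.sum_range_succ,
    coeff_lin]

lemma smul_lin [CommRing k] [Algebra k A] (c : k) (a : A) : c • lin a = lin (c • a) := by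
  ext n
  simp only [coeff_smul, coeff_lin]
  split_ifs <;> simp

lemma hasLowCoeffs_expPS (k : Type*) [Field k] [Algebra k A] (b : A) :
    HasLowCoeffs (expPS k (lin b)) b ((2 : k)⁻¹ • (b * b)) := by
  refine ⟨?_, ?_, ?_⟩ <;>
    simp [expPS, Finset.sum_range_succ, coeff_lin, coeff_one, pow_two, coeff_two_lin_mul_lin,
      Nat.factorial]

lemma hasLowCoeffs_substPS [CommRing k] [Algebra k A] {φ : NC k 2} (hφ : φ [] = 1) (p q : A) :
    HasLowCoeffs (substPS φ (lin p) (lin q)) (φ [0] • p + φ [1] • q)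
      (φ [0, 0] • (p * p) + φ [0, 1] • (p * q) + φ [1, 0] • (q * p) + φ [1, 1] • (q * q)) := by
  refine ⟨?_, ?_, ?_⟩
  · simp [substPS, hφ]
  · simp [substPS, Finset.sum_range_succ, sum_fin_one_fun, Fin.sum_univ_two, coeff_lin]
  · simp [substPS, Finset.sum_range_succ, sum_fin_one_fun, sum_fin_two_fun, Fin.sum_univ_two,
      coeff_lin, coeff_two_lin_mul_lin]
    abel

lemma IsCommGroupLike.hasLowCoeffs_substPS [Field k] [CharZero k] [Algebra k A] {φ : NC k 2}
    (hφ : IsCommGroupLike φ) (p q : A) :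
    HasLowCoeffs (substPS φ (lin p) (lin q)) 0 (φ [0, 1] • (p * q - q * p)) := by
  obtain ⟨hXX, hYY, hYX⟩ := hφ.coeff_quadratic
  simpa [hφ.2.1, hφ.2.2, hXX, hYY, hYX, smul_sub, sub_eq_add_neg] using
    _root_.hasLowCoeffs_substPS hφ.1.1 p q

end LowCoeffs

lemma ZF_eq_lin [CommRing k] : ZF k = lin (-FreeAlgebra.ι k 0 - FreeAlgebra.ι k 1) := by
  ext n
  simp only [ZF, XF, YF, map_sub, map_neg, coeff_lin]
  split_ifs <;> simp

-- `E₀₁E₁₂ = E₀₂`, and every other word in `E₀₁`, `E₁₂` (including the empty one) has zero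
-- `(0, 2)` entry, so this is the coefficient of the word `XY`.
noncomputable def coeffXY (k : Type*) [CommRing k] : FreeAlgebra k (Fin 2) →ₗ[k] k :=
  (Matrix.entryLinearMap k k (0 : Fin 3) (2 : Fin 3)).comp
    (FreeAlgebra.lift k ![Matrix.single 0 1 1, Matrix.single 1 2 1]).toLinearMap

lemma coeffXY_ι_mul_ι [CommRing k] (i j : Fin 2) :
    coeffXY k (FreeAlgebra.ι k i * FreeAlgebra.ι k j) = if i = 0 ∧ j = 1 then 1 else 0 := by
  fin_cases i <;> fin_cases j <;> simp [coeffXY, Matrix.single_mul_single_same]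

/-- If a commutator group-like `φ` and `μ ∈ k` satisfy the 3-cycle relation,
then comparing the coefficients of `XY` gives `c₂(φ) = μ²/24`. -/
theorem statement11 (k : Type*) [Field k] [CharZero k] (φ : NC k 2)
    (hφ : IsCommGroupLike φ) (μ : k) (h3 : ThreeCycleMul k μ φ) :
    φ [0, 1] = μ ^ 2 / 24 := by
  set x := FreeAlgebra.ι k (0 : Fin 2)
  set y := FreeAlgebra.ι k (1 : Fin 2)
  have hlow := (((((hasLowCoeffs_expPS k ((μ / 2) • x)).mul
    (hφ.hasLowCoeffs_substPS (-x - y) x)).mul (hasLowCoeffs_expPS k ((μ / 2) • (-x - y)))).mul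
    (hφ.hasLowCoeffs_substPS y (-x - y))).mul (hasLowCoeffs_expPS k ((μ / 2) • y))).mul
    (hφ.hasLowCoeffs_substPS x y)
  rw [ThreeCycleMul, ZF_eq_lin, XF, YF, smul_lin, smul_lin, smul_lin] at h3
  have hXY : 3 * φ [0, 1] - μ ^ 2 / 8 = 0 := by
    have h := congrArg (coeffXY k) (hlow.eq_zero_of_eq_one h3).2
    simp only [add_mul, mul_sub, sub_mul, mul_neg, neg_mul, smul_mul_assoc, mul_smul_comm,
      mul_zero, zero_mul, map_add, map_sub, map_neg, map_smul, map_zero, coeffXY_ι_mul_ι, x, y] at h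
    norm_num at h
    linear_combination h
  linear_combination hXY / 3
end
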